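/- Let p = (i, ℓ) be a path with 0 < ℓ < a_i + b_i, and let pD denote the path (i − ℓ, a_i + b_i − ℓ) (the descent of p). Then grade(pD) = 2 − grade(p); equivalently, grade(i, ℓ) + grade(i − ℓ, a_i + b_i − ℓ) = 2. -/

import Mathlib

/-- Paths of the quiver `ℤ` (arrows `i → i - 1`) are pairs `(source, length)`;
`p` is a subpath of `q` iff the source of `p` is at most that of `q` and the
target of `q` is at most that of `p`. -/
def ZIsSubpath (p q : ℤ × ℕ) : Prop :=
  p.1 ≤ q.1 ∧ q.1 - (q.2 : ℤ) ≤ p.1 - (p.2 : ℤ)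

/-- Proper subpath: a subpath that is not the whole path. -/
def ZIsProperSubpath (p q : ℤ × ℕ) : Prop :=
  ZIsSubpath p q ∧ p ≠ q

/-- A path is factorisable (w.r.t. the factorisable vertices, i.e. the values
of `x`) if both its source and its target are factorisable vertices. -/
def IsFactorisable (x : ℤ → ℤ) (p : ℤ × ℕ) : Prop :=
  (∃ s : ℤ, x s = p.1) ∧ ∃ s : ℤ, x s = p.1 - (p.2 : ℤ)

/-- The grade of the path `(i, ℓ)` is `m i - m (i - ℓ)`, where
`m t = max {s : x s ≤ t}`. -/
def pathGrade (m : ℤ → ℤ) (p : ℤ × ℕ) : ℤ :=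
  m p.1 - m (p.1 - (p.2 : ℤ))

/-!
Put `k = m i`, so `x k ≤ i < x (k + 1)`. The factorisable grade-2 paths `x k → x (k - 2)` and
`x (k + 1) → x (k - 1)` lie in `C`. Maximality of the elements of `C` in `N`, and of `a i`, forces
the target `i - a i - b i` of the path `(i, a i + b i)` into `[x (k - 2), x (k - 1))`, so that path
has grade 2. Grade is additive under concatenation, and `(i, ℓ)` followed by its descent is
`(i, a i + b i)`.
-/

section Floor

variable {x m : ℤ → ℤ}

theorem galoisConnection_of_floor (hx : Monotone x)
    (hm : ∀ t : ℤ, x (m t) ≤ t ∧ ∀ s : ℤ, x s ≤ t → s ≤ m t) : GaloisConnection x m :=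
  fun s t => ⟨(hm t).2 s, fun h => (hx h).trans (hm t).1⟩

theorem floor_eq_iff (gc : GaloisConnection x m) {t k : ℤ} :
    m t = k ↔ x k ≤ t ∧ t < x (k + 1) := by
  rw [gc k t, lt_iff_not_ge, gc (k + 1) t]
  omega

theorem floor_apply_self (hx : StrictMono x) (gc : GaloisConnection x m) (s : ℤ) :
    m (x s) = s :=
  (floor_eq_iff gc).2 ⟨le_rfl, hx (lt_add_one s)⟩

end Floor

/-- The path with source `s` and target `t`, for `t ≤ s`. -/
def pathBetween (s t : ℤ) : ℤ × ℕ := (s, (s - t).toNat)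

section PathBetween

variable {s t : ℤ}

theorem pathBetween_target (h : t ≤ s) :
    (pathBetween s t).1 - ((pathBetween s t).2 : ℤ) = t := by
  simp only [pathBetween]
  omega

theorem zIsSubpath_pathBetween_iff (h : t ≤ s) {p : ℤ × ℕ} :
    ZIsSubpath p (pathBetween s t) ↔ p.1 ≤ s ∧ t ≤ p.1 - (p.2 : ℤ) := by
  rw [ZIsSubpath, pathBetween_target h]
  rfl

theorem pathBetween_zIsSubpath_iff (h : t ≤ s) {q : ℤ × ℕ} :
    ZIsSubpath (pathBetween s t) q ↔ s ≤ q.1 ∧ q.1 - (q.2 : ℤ) ≤ t := by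
  rw [ZIsSubpath, pathBetween_target h]
  rfl

theorem pathGrade_pathBetween (m : ℤ → ℤ) (h : t ≤ s) :
    pathGrade m (pathBetween s t) = m s - m t := by
  rw [pathGrade, pathBetween_target h]
  rfl

theorem isFactorisable_pathBetween (x : ℤ → ℤ) {j k : ℤ} (h : x j ≤ x k) :
    IsFactorisable x (pathBetween (x k) (x j)) :=
  ⟨⟨k, rfl⟩, ⟨j, (pathBetween_target h).symm⟩⟩

end PathBetween

theorem pathGrade_add_pathGrade (m : ℤ → ℤ) (i : ℤ) {ℓ n : ℕ} (h : ℓ ≤ n) :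
    pathGrade m (i, ℓ) + pathGrade m (i - ℓ, n - ℓ) = pathGrade m (i, n) := by
  simp only [pathGrade, Nat.cast_sub h]
  ring_nf

theorem pathBetween_mem_of_add_two_eq {x m : ℤ → ℤ} {C : Set (ℤ × ℕ)} (hx : StrictMono x)
    (gc : GaloisConnection x m)
    (hC2 : ∀ p : ℤ × ℕ, IsFactorisable x p → pathGrade m p = 2 → p ∈ C)
    {j k : ℤ} (h : j + 2 = k) : pathBetween (x k) (x j) ∈ C := by
  have hjk : x j ≤ x k := hx.monotone (by omega)
  refine hC2 _ (isFactorisable_pathBetween x hjk) ?_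
  rw [pathGrade_pathBetween m hjk, floor_apply_self hx gc, floor_apply_self hx gc]
  omega

section Longest

variable {N C : Set (ℤ × ℕ)} {a b : ℤ → ℕ}

theorem le_of_zIsSubpath_of_mem (hNdown : ∀ p q : ℤ × ℕ, ZIsSubpath p q → q ∈ N → p ∈ N)
    (ha : ∀ i : ℤ, (i, a i) ∈ N ∧ ∀ ℓ : ℕ, (i, ℓ) ∈ N → ℓ ≤ a i)
    {i : ℤ} {ℓ : ℕ} {q : ℤ × ℕ} (hq : q ∈ N) (h : ZIsSubpath (i, ℓ) q) : ℓ ≤ a i :=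
  (ha i).2 ℓ (hNdown _ _ h hq)

theorem b_le_one (hb : ∀ i : ℤ, (b i = 0 ∧ ∃ ℓ : ℕ, (i, ℓ) ∈ C) ∨ (b i = 1 ∧ ¬ ∃ ℓ : ℕ, (i, ℓ) ∈ C))
    (i : ℤ) : b i ≤ 1 := by
  rcases hb i with ⟨h, -⟩ | ⟨h, -⟩ <;> omega

theorem mem_iff_b_eq_zero (hCN : C ⊆ N) (hCmax : ∀ p ∈ C, ∀ q ∈ N, ZIsSubpath p q → p = q)
    (ha : ∀ i : ℤ, (i, a i) ∈ N ∧ ∀ ℓ : ℕ, (i, ℓ) ∈ N → ℓ ≤ a i)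
    (hb : ∀ i : ℤ, (b i = 0 ∧ ∃ ℓ : ℕ, (i, ℓ) ∈ C) ∨ (b i = 1 ∧ ¬ ∃ ℓ : ℕ, (i, ℓ) ∈ C))
    (i : ℤ) : (i, a i) ∈ C ↔ b i = 0 := by
  rcases hb i with ⟨hb0, ℓ, hℓ⟩ | ⟨hb1, hnone⟩
  · have hle : ℓ ≤ a i := (ha i).2 ℓ (hCN hℓ)
    have heq : (i, ℓ) = (i, a i) := hCmax _ hℓ _ (ha i).1 ⟨le_rfl, by simp only; omega⟩
    exact iff_of_true (heq ▸ hℓ) hb0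
  · exact iff_of_false (fun h => hnone ⟨_, h⟩) (by omega)

end Longest

section Descent

variable {x m : ℤ → ℤ} {N C : Set (ℤ × ℕ)} {a b : ℤ → ℕ}

theorem x_floor_sub_two_le (hx : StrictMono x) (gc : GaloisConnection x m) (hCN : C ⊆ N)
    (hCmax : ∀ p ∈ C, ∀ q ∈ N, ZIsSubpath p q → p = q)
    (hC2 : ∀ p : ℤ × ℕ, IsFactorisable x p → pathGrade m p = 2 → p ∈ C)
    (ha : ∀ i : ℤ, (i, a i) ∈ N ∧ ∀ ℓ : ℕ, (i, ℓ) ∈ N → ℓ ≤ a i)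
    (hb : ∀ i : ℤ, (b i = 0 ∧ ∃ ℓ : ℕ, (i, ℓ) ∈ C) ∨ (b i = 1 ∧ ¬ ∃ ℓ : ℕ, (i, ℓ) ∈ C))
    (i : ℤ) : x (m i - 2) ≤ i - (a i + b i : ℕ) := by
  by_contra! hlt
  have hsrc : x (m i) ≤ i := gc.l_u_le i
  have hbi := b_le_one hb i
  have hts : x (m i - 2) ≤ x (m i) := hx.monotone (by omega)
  have hqC : pathBetween (x (m i)) (x (m i - 2)) ∈ C := pathBetween_mem_of_add_two_eq hx gc hC2 (by ring)
  have heq : pathBetween (x (m i)) (x (m i - 2)) = (i, a i) :=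
    hCmax _ hqC _ (ha i).1 ((pathBetween_zIsSubpath_iff hts).2 ⟨hsrc, by push_cast at hlt; omega⟩)
  have hb0 : b i = 0 := (mem_iff_b_eq_zero hCN hCmax ha hb i).1 (heq ▸ hqC)
  have htarget := pathBetween_target hts
  rw [heq] at htarget
  push_cast at hlt htarget
  omega

theorem lt_x_floor_sub_one (hx : StrictMono x) (gc : GaloisConnection x m) (hCN : C ⊆ N)
    (hNdown : ∀ p q : ℤ × ℕ, ZIsSubpath p q → q ∈ N → p ∈ N)
    (hCmax : ∀ p ∈ C, ∀ q ∈ N, ZIsSubpath p q → p = q)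
    (hC2 : ∀ p : ℤ × ℕ, IsFactorisable x p → pathGrade m p = 2 → p ∈ C)
    (ha : ∀ i : ℤ, (i, a i) ∈ N ∧ ∀ ℓ : ℕ, (i, ℓ) ∈ N → ℓ ≤ a i)
    (hb : ∀ i : ℤ, (b i = 0 ∧ ∃ ℓ : ℕ, (i, ℓ) ∈ C) ∨ (b i = 1 ∧ ¬ ∃ ℓ : ℕ, (i, ℓ) ∈ C))
    (i : ℤ) : i - (a i + b i : ℕ) < x (m i - 1) := by
  by_contra! hle
  have hsrc : i < x (m i + 1) := ((floor_eq_iff gc).1 rfl).2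
  have hts : x (m i - 1) ≤ x (m i + 1) := hx.monotone (by omega)
  have hqN : pathBetween (x (m i + 1)) (x (m i - 1)) ∈ N :=
    hCN (pathBetween_mem_of_add_two_eq hx gc hC2 (by ring))
  have hsub : ∀ ℓ ≤ a i + b i, ZIsSubpath (i, ℓ) (pathBetween (x (m i + 1)) (x (m i - 1))) :=
    fun ℓ hℓ => (zIsSubpath_pathBetween_iff hts).2 ⟨hsrc.le, by push_cast at hle; simp only; omega⟩
  have hb0 : b i = 0 := by
    have := le_of_zIsSubpath_of_mem hNdown ha hqN (hsub _ le_rfl)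
    omega
  have heq := hCmax _ ((mem_iff_b_eq_zero hCN hCmax ha hb i).2 hb0) _ hqN (hsub _ (by omega))
  exact hsrc.ne (congrArg Prod.fst heq)

end Descent

theorem descent_grade_general (x m : ℤ → ℤ) (hx : StrictMono x)
    (hm : ∀ t : ℤ, x (m t) ≤ t ∧ ∀ s : ℤ, x s ≤ t → s ≤ m t)
    (N : Set (ℤ × ℕ))
    (hNdown : ∀ p q : ℤ × ℕ, ZIsSubpath p q → q ∈ N → p ∈ N)
    (C : Set (ℤ × ℕ)) (hCN : C ⊆ N)
    (hCmax : ∀ p ∈ C, ∀ q ∈ N, ZIsSubpath p q → p = q)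
    (hC2 : ∀ p : ℤ × ℕ, IsFactorisable x p → pathGrade m p = 2 → p ∈ C)
    (a b : ℤ → ℕ)
    (ha : ∀ i : ℤ, (i, a i) ∈ N ∧ ∀ ℓ : ℕ, (i, ℓ) ∈ N → ℓ ≤ a i)
    (hb : ∀ i : ℤ, (b i = 0 ∧ ∃ ℓ : ℕ, (i, ℓ) ∈ C) ∨ (b i = 1 ∧ ¬ ∃ ℓ : ℕ, (i, ℓ) ∈ C)) :
    ∀ (i : ℤ) (ℓ : ℕ), 0 < ℓ → ℓ < a i + b i →
      pathGrade m (i - (ℓ : ℤ), a i + b i - ℓ) = 2 - pathGrade m (i, ℓ) := by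
  intro i ℓ _ hℓ
  have gc := galoisConnection_of_floor hx.monotone hm
  have hfloor : m (i - (a i + b i : ℕ)) = m i - 2 :=
    (floor_eq_iff gc).2
      ⟨x_floor_sub_two_le hx gc hCN hCmax hC2 ha hb i,
        by rw [show m i - 2 + 1 = m i - 1 by ring]
           exact lt_x_floor_sub_one hx gc hCN hNdown hCmax hC2 ha hb i⟩
  have hgrade : pathGrade m (i, a i + b i) = 2 := by
    rw [pathGrade, hfloor]
    ring
  have := pathGrade_add_pathGrade m i hℓ.le
  omega

/-- **Descent and grade.** If `0 < ℓ < a i + b i`, then the descent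
`(i - ℓ, a i + b i - ℓ)` of the path `(i, ℓ)` satisfies
`grade (descent) = 2 - grade (i, ℓ)`. -/
theorem descent_grade (x m : ℤ → ℤ) (hx : StrictMono x)
    (hm : ∀ t : ℤ, x (m t) ≤ t ∧ ∀ s : ℤ, x s ≤ t → s ≤ m t)
    (N : Set (ℤ × ℕ))
    (hN0 : ∀ i : ℤ, (i, 0) ∈ N)
    (hNdown : ∀ p q : ℤ × ℕ, ZIsSubpath p q → q ∈ N → p ∈ N)
    (hNbdd : ∃ B : ℕ, ∀ p ∈ N, p.2 ≤ B)
    (C : Set (ℤ × ℕ)) (hCN : C ⊆ N)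
    (hCanti : ∀ p ∈ C, ∀ q ∈ C, ZIsSubpath p q → p = q)
    (hCmax : ∀ p ∈ C, ∀ q ∈ N, ZIsSubpath p q → p = q)
    (hC2 : ∀ p : ℤ × ℕ, IsFactorisable x p → pathGrade m p = 2 → p ∈ C)
    (a b : ℤ → ℕ)
    (ha : ∀ i : ℤ, (i, a i) ∈ N ∧ ∀ ℓ : ℕ, (i, ℓ) ∈ N → ℓ ≤ a i)
    (hb : ∀ i : ℤ, (b i = 0 ∧ ∃ ℓ : ℕ, (i, ℓ) ∈ C) ∨ (b i = 1 ∧ ¬ ∃ ℓ : ℕ, (i, ℓ) ∈ C)) :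
    ∀ (i : ℤ) (ℓ : ℕ), 0 < ℓ → ℓ < a i + b i →
      pathGrade m (i - (ℓ : ℤ), a i + b i - ℓ) = 2 - pathGrade m (i, ℓ) :=
  descent_grade_general x m hx hm N hNdown C hCN hCmax hC2 a b ha hb
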